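/- arXiv:1811.07661 — 4 statements merged into one kernel-verified Lean document; each statement's English description precedes it below -/
import Mathlib

section
/- Consider a single-layer network of m RFMs in which RFM i has n^i ≥ 1 sites and positive rates λ^i_0,...,λ^i_{n^i} and is fed the constant input v_i > 0 (so its effective initiation rate is v_i λ^i_0), and fix output weights b_1,...,b_m > 0. For a weight vector v ∈ ℝ^m_{++} define the steady-state network output Y(v) := Σ_{i=1}^m b_i λ^i_{n^i} e^i_{n^i}(v_i), where e^i(v_i) ∈ (0,1)^{n^i} satisfies the RFM steady-state equations for the rates (v_i λ^i_0, λ^i_1,...,λ^i_{n^i}). Then for any v, v' ∈ ℝ^m_{++} with v ≠ v' and any t ∈ (0,1), and any steady states as above at v, v', and tv+(1−t)v', one has Y(tv+(1−t)v') > tY(v) + (1−t)Y(v'); that is, Y is strictly concave on ℝ^m_{++}. -/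
open scoped BigOperators

/-- Extended occupancy vector of an RFM chain with `N + 1` sites:
the input value `u` at the left boundary, the state in the middle,
and `0` at the right boundary. -/
noncomputable def rfmExt {N : ℕ} (u : ℝ) (x : Fin (N + 1) → ℝ) : Fin (N + 3) → ℝ :=
  Fin.cons u (Fin.snoc x 0)

/-- The flow into site `j` (so `j = 0` is the entry flow `λ₀ u (1 - x₁)`,
`j` internal is `λ_j x_j (1 - x_{j+1})` in 1-based notation,
and `j = N + 1` is the exit flow `λ_n x_n`). -/
noncomputable def rfmFlow {N : ℕ} (lam : Fin (N + 2) → ℝ) (u : ℝ)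
    (x : Fin (N + 1) → ℝ) (j : Fin (N + 2)) : ℝ :=
  lam j * rfmExt u x j.castSucc * (1 - rfmExt u x j.succ)

/-- The vector field of a single RFMIO chain with input `u`. -/
noncomputable def rfmVF {N : ℕ} (lam : Fin (N + 2) → ℝ) (u : ℝ)
    (x : Fin (N + 1) → ℝ) (j : Fin (N + 1)) : ℝ :=
  rfmFlow lam u x j.castSucc - rfmFlow lam u x j.succ

/-- The steady-state equations of an RFM chain with input `u`: all flows are equal,
i.e. `λ₀ u (1-e₁) = λ₁ e₁ (1-e₂) = ⋯ = λ_n e_n`. -/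
def rfmSS {N : ℕ} (lam : Fin (N + 2) → ℝ) (u : ℝ) (e : Fin (N + 1) → ℝ) : Prop :=
  ∀ j : Fin (N + 1), rfmFlow lam u e j.castSucc = rfmFlow lam u e j.succ

/-- The rate vector of an RFMIO with constant input `v`: the initiation rate `λ₀` is
replaced by `v λ₀` and the other rates are unchanged. -/
noncomputable def scaledRates {N : ℕ} (lam : Fin (N + 2) → ℝ) (v : ℝ) :
    Fin (N + 2) → ℝ :=
  fun j => if j = 0 then v * lam 0 else lam j

private lemma down_induction {N : ℕ} {P : ℕ → Prop} (base : P (N+1))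
    (step : ∀ k, k ≤ N → P (k+1) → P k) : ∀ k, k ≤ N+1 → P k := by
  have H : ∀ d k, k + d = N+1 → P k := by
    intro d
    induction d with
    | zero =>
      intro k hk
      have hk' : k = N+1 := by omega
      subst hk'; exact base
    | succ d ih =>
      intro k hk
      exact step k (by omega) (ih (k+1) (by omega))
  intro k hk
  exact H (N+1-k) k (by omega)

def IsRFMChain (N : ℕ) (lamN D : ℕ → ℝ) (r : ℝ) : Prop :=
  D (N+1) = 1 ∧ (∀ k, k ≤ N+1 → 0 < D k) ∧ 0 < r ∧
    ∀ k, k ≤ N → lamN (k+1) * (1 - D k) * D (k+1) = r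

private lemma chain_mono {N : ℕ} {lamN D D' : ℕ → ℝ} {r r' : ℝ}
    (hlam : ∀ k, k ≤ N+1 → 0 < lamN k)
    (h : IsRFMChain N lamN D r) (h' : IsRFMChain N lamN D' r') (hrr : r ≤ r') :
    ∀ k, k ≤ N+1 → D' k ≤ D k ∧ r * D' k ≤ r' * D k := by
  obtain ⟨hD1, hDpos, hrpos, hrec⟩ := id h
  obtain ⟨hD1', hDpos', hrpos', hrec'⟩ := id h'
  refine down_induction ?_ ?_
  · rw [hD1, hD1']; exact ⟨le_refl 1, by linarith⟩
  · intro k hk ih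
    obtain ⟨ih1, ih2⟩ := ih
    have hL := hlam (k+1) (by omega)
    have hA1 := hDpos (k+1) (by omega)
    have hB1 := hDpos' (k+1) (by omega)
    have hA := hDpos k (by omega)
    have hB := hDpos' k (by omega)
    have e1 := hrec k hk
    have e1' := hrec' k hk
    rw [← e1, ← e1'] at ih2
    have h1 : D' k ≤ D k := by nlinarith [mul_pos hL (mul_pos hA1 hB1)]
    refine ⟨h1, ?_⟩
    nlinarith [mul_pos hrpos' hB]

private lemma chain_mono_strict {N : ℕ} {lamN D D' : ℕ → ℝ} {r r' : ℝ}
    (hlam : ∀ k, k ≤ N+1 → 0 < lamN k)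
    (h : IsRFMChain N lamN D r) (h' : IsRFMChain N lamN D' r') (hrr : r < r') :
    ∀ k, k ≤ N+1 → r * D' k < r' * D k ∧ (k ≤ N → D' k < D k) := by
  obtain ⟨hD1, hDpos, hrpos, hrec⟩ := id h
  obtain ⟨hD1', hDpos', hrpos', hrec'⟩ := id h'
  refine down_induction ?_ ?_
  · refine ⟨by rw [hD1, hD1']; linarith, fun hk => absurd hk (by omega)⟩
  · intro k hk ih
    obtain ⟨ih1, _⟩ := ih
    have hL := hlam (k+1) (by omega)
    have hA1 := hDpos (k+1) (by omega)
    have hB1 := hDpos' (k+1) (by omega)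
    have hA := hDpos k (by omega)
    have hB := hDpos' k (by omega)
    have e1 := hrec k hk
    have e1' := hrec' k hk
    rw [← e1, ← e1'] at ih1
    have h1 : D' k < D k := by nlinarith [mul_pos hL (mul_pos hA1 hB1)]
    exact ⟨by nlinarith [mul_pos hrpos' hB], fun _ => h1⟩

private lemma chain_det {N : ℕ} {lamN D D' : ℕ → ℝ} {r r' : ℝ}
    (hlam : ∀ k, k ≤ N+1 → 0 < lamN k)
    (h : IsRFMChain N lamN D r) (h' : IsRFMChain N lamN D' r') (hrr : r = r') :
    ∀ k, k ≤ N+1 → D k = D' k := fun k hk =>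
  le_antisymm ((chain_mono hlam h' h (le_of_eq hrr.symm) k hk).1)
    ((chain_mono hlam h h' (le_of_eq hrr) k hk).1)

private lemma chain_cross {N : ℕ} {lamN D D' : ℕ → ℝ} {r r' : ℝ}
    (hlam : ∀ k, k ≤ N+1 → 0 < lamN k)
    (h : IsRFMChain N lamN D r) (h' : IsRFMChain N lamN D' r') :
    ∀ k, k ≤ N+1 → 0 ≤ (D k - D' k) * (r' * D k - r * D' k) := by
  intro k hk
  rcases le_total r r' with hrr | hrr
  · obtain ⟨m1, m2⟩ := chain_mono hlam h h' hrr k hk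
    nlinarith
  · obtain ⟨m1, m2⟩ := chain_mono hlam h' h hrr k hk
    nlinarith

private lemma chain_cross_strict {N : ℕ} {lamN D D' : ℕ → ℝ} {r r' : ℝ}
    (hlam : ∀ k, k ≤ N+1 → 0 < lamN k)
    (h : IsRFMChain N lamN D r) (h' : IsRFMChain N lamN D' r') (hne : r ≠ r') :
    ∀ k, k ≤ N → 0 < (D k - D' k) * (r' * D k - r * D' k) := by
  intro k hk
  rcases lt_or_gt_of_ne hne with hrr | hrr
  · obtain ⟨m1, m2⟩ := chain_mono_strict hlam h h' hrr k (by omega)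
    have := m2 hk
    nlinarith
  · obtain ⟨m1, m2⟩ := chain_mono_strict hlam h' h hrr k (by omega)
    have := m2 hk
    nlinarith

private lemma chain_convex {N : ℕ} {lamN D D' D'' : ℕ → ℝ} {r r' r'' t : ℝ}
    (hlam : ∀ k, k ≤ N+1 → 0 < lamN k)
    (h : IsRFMChain N lamN D r) (h' : IsRFMChain N lamN D' r')
    (h'' : IsRFMChain N lamN D'' r'')
    (ht0 : 0 < t) (ht1 : t < 1) (H : r'' ≤ t * r + (1 - t) * r') :
    ∀ k, k ≤ N+1 →
      r'' * (D k * D' k) ≤ (t * r * D' k + (1 - t) * r' * D k) * D'' k := by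
  have hX := chain_cross hlam h h'
  obtain ⟨hD1, hDpos, hrpos, hrec⟩ := id h
  obtain ⟨hD1', hDpos', hrpos', hrec'⟩ := id h'
  obtain ⟨hD1'', hDpos'', hrpos'', hrec''⟩ := id h''
  have hs : 0 < 1 - t := by linarith
  refine down_induction ?_ ?_
  · rw [hD1, hD1', hD1'']; nlinarith
  · intro k hk ih
    have hL := hlam (k+1) (by omega)
    have hA1 := hDpos (k+1) (by omega)
    have hB1 := hDpos' (k+1) (by omega)
    have hC1 := hDpos'' (k+1) (by omega)
    have hA := hDpos k (by omega)
    have hB := hDpos' k (by omega)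
    have hC := hDpos'' k (by omega)
    have e1 := hrec k hk
    have e1' := hrec' k hk
    have e1'' := hrec'' k hk
    rw [← e1, ← e1', ← e1''] at ih
    have hC' : t * D k + (1 - t) * D' k ≤ D'' k := by
      nlinarith [ih, mul_pos (mul_pos hL hA1) (mul_pos hB1 hC1)]
    have hq : 0 < t * r * D' k + (1 - t) * r' * D k :=
      add_pos (mul_pos (mul_pos ht0 hrpos) hB) (mul_pos (mul_pos hs hrpos') hA)
    have hXk := hX k (by omega)
    nlinarith [mul_nonneg (mul_pos ht0 hs).le hXk,
      mul_nonneg (sub_nonneg.2 hC') hq.le,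
      mul_nonneg (sub_nonneg.2 H) (mul_pos hA hB).le]

private lemma chain_convex_strict {N : ℕ} {lamN D D' D'' : ℕ → ℝ} {r r' r'' t : ℝ}
    (hlam : ∀ k, k ≤ N+1 → 0 < lamN k)
    (h : IsRFMChain N lamN D r) (h' : IsRFMChain N lamN D' r')
    (h'' : IsRFMChain N lamN D'' r'')
    (ht0 : 0 < t) (ht1 : t < 1) (H : r'' ≤ t * r + (1 - t) * r') (hne : r ≠ r') :
    ∀ k, k ≤ N →
      r'' * (D k * D' k) < (t * r * D' k + (1 - t) * r' * D k) * D'' k := by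
  intro k hk
  have ih := chain_convex hlam h h' h'' ht0 ht1 H (k+1) (by omega)
  have hXk := chain_cross_strict hlam h h' hne k hk
  obtain ⟨hD1, hDpos, hrpos, hrec⟩ := id h
  obtain ⟨hD1', hDpos', hrpos', hrec'⟩ := id h'
  obtain ⟨hD1'', hDpos'', hrpos'', hrec''⟩ := id h''
  have hs : 0 < 1 - t := by linarith
  have hL := hlam (k+1) (by omega)
  have hA1 := hDpos (k+1) (by omega)
  have hB1 := hDpos' (k+1) (by omega)
  have hC1 := hDpos'' (k+1) (by omega)
  have hA := hDpos k (by omega)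
  have hB := hDpos' k (by omega)
  have hC := hDpos'' k (by omega)
  have e1 := hrec k hk
  have e1' := hrec' k hk
  have e1'' := hrec'' k hk
  rw [← e1, ← e1', ← e1''] at ih
  have hC' : t * D k + (1 - t) * D' k ≤ D'' k := by
    nlinarith [ih, mul_pos (mul_pos hL hA1) (mul_pos hB1 hC1)]
  have hq : 0 < t * r * D' k + (1 - t) * r' * D k :=
    add_pos (mul_pos (mul_pos ht0 hrpos) hB) (mul_pos (mul_pos hs hrpos') hA)
  nlinarith [mul_pos (mul_pos ht0 hs) hXk,
    mul_nonneg (sub_nonneg.2 hC') hq.le,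
    mul_nonneg (sub_nonneg.2 H) (mul_pos hA hB).le]

private lemma rfm_key {N : ℕ} {lamN D D' D'' : ℕ → ℝ} {r r' r'' L0 v v' t : ℝ}
    (hlam : ∀ k, k ≤ N+1 → 0 < lamN k)
    (h : IsRFMChain N lamN D r) (h' : IsRFMChain N lamN D' r')
    (h'' : IsRFMChain N lamN D'' r'')
    (hL0 : 0 < L0) (hvpos : 0 < v) (hv'pos : 0 < v')
    (hveq : v * L0 * D 0 = r) (hveq' : v' * L0 * D' 0 = r')
    (hveq'' : (t * v + (1 - t) * v') * L0 * D'' 0 = r'')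
    (ht0 : 0 < t) (ht1 : t < 1) :
    t * r + (1 - t) * r' ≤ r'' ∧ (v ≠ v' → t * r + (1 - t) * r' < r'') := by
  have hD0 := h.2.1 0 (by omega)
  have hD0' := h'.2.1 0 (by omega)
  have hD0'' := h''.2.1 0 (by omega)
  by_cases hvv : v = v'
  · subst hvv
    have hr : r = r' := by
      rcases lt_trichotomy r r' with hlt | heq | hlt
      · have := (chain_mono_strict hlam h h' hlt 0 (by omega)).1
        rw [← hveq, ← hveq'] at this
        nlinarith
      · exact heq
      · have := (chain_mono_strict hlam h' h hlt 0 (by omega)).1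
        rw [← hveq, ← hveq'] at this
        nlinarith
    have hveq''2 : v * L0 * D'' 0 = r'' := by
      have hv2 : t * v + (1 - t) * v = v := by ring
      rw [hv2] at hveq''
      exact hveq''
    have hr'' : r'' = r := by
      rcases lt_trichotomy r r'' with hlt | heq | hlt
      · have := (chain_mono_strict hlam h h'' hlt 0 (by omega)).1
        rw [← hveq, ← hveq''2] at this
        nlinarith
      · exact heq.symm
      · have := (chain_mono_strict hlam h'' h hlt 0 (by omega)).1
        rw [← hveq, ← hveq''2] at this
        nlinarith
    constructor
    · rw [hr'', ← hr]; ring_nf; exact le_refl _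
    · intro hne; exact absurd rfl hne
  · have hrne : r ≠ r' := by
      intro hrr
      have hDD := chain_det hlam h h' hrr 0 (by omega)
      apply hvv
      have : v * (L0 * D 0) = v' * (L0 * D 0) := by
        rw [mul_assoc] at hveq hveq'
        rw [hveq, hDD, hveq', hrr]
      exact mul_right_cancel₀ (by positivity) this
    have hstrict : t * r + (1 - t) * r' < r'' := by
      by_contra hc
      have H : r'' ≤ t * r + (1 - t) * r' := le_of_not_gt hc
      have key := chain_convex_strict hlam h h' h'' ht0 ht1 H hrne 0 (Nat.zero_le N)
      rw [← hveq, ← hveq', ← hveq''] at key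
      nlinarith
    exact ⟨hstrict.le, fun _ => hstrict⟩

private lemma rfmExt_mid {N : ℕ} (u : ℝ) (x : Fin (N+1) → ℝ) (k : ℕ)
    (hk : k < N+1) (h : k+1 < N+3) : rfmExt u x ⟨k+1, h⟩ = x ⟨k, hk⟩ := by
  have h1 : (⟨k+1, h⟩ : Fin (N+3)) = Fin.succ (Fin.castSucc (⟨k, hk⟩ : Fin (N+1))) := rfl
  rw [rfmExt, h1, Fin.cons_succ]
  exact Fin.snoc_castSucc _ _ _

private lemma rfmExt_zero {N : ℕ} (u : ℝ) (x : Fin (N+1) → ℝ) (h : 0 < N+3) :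
    rfmExt u x ⟨0, h⟩ = u := rfl

private lemma rfmExt_last {N : ℕ} (u : ℝ) (x : Fin (N+1) → ℝ) (h : N+2 < N+3) :
    rfmExt u x ⟨N+2, h⟩ = 0 := by
  have h1 : (⟨N+2, h⟩ : Fin (N+3)) = Fin.succ (Fin.last (N+1)) := rfl
  rw [rfmExt, h1, Fin.cons_succ]
  exact Fin.snoc_last _ _

private lemma rfm_extract {N : ℕ} (lamF : Fin (N+2) → ℝ) (hlamF : ∀ j, 0 < lamF j)
    (v : ℝ) (ee : Fin (N+1) → ℝ) (hee : ∀ j, ee j ∈ Set.Ioo (0:ℝ) 1)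
    (hss : rfmSS (scaledRates lamF v) 1 ee) :
    ∃ D : ℕ → ℝ,
      IsRFMChain N (fun k => if h : k < N+2 then lamF ⟨k, h⟩ else 1) D
        (lamF (Fin.last (N+1)) * ee (Fin.last N)) ∧
      v * lamF 0 * D 0 = lamF (Fin.last (N+1)) * ee (Fin.last N) := by
  set r := lamF (Fin.last (N+1)) * ee (Fin.last N) with hrdef
  set F := rfmFlow (scaledRates lamF v) 1 ee with hFdef
  set D : ℕ → ℝ := fun k => if h : k < N+1 then 1 - ee ⟨k, h⟩ else 1 with hDdef
  have hF : ∀ (a : ℕ) (ha : a < N+2), F ⟨a, ha⟩ =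
      scaledRates lamF v ⟨a, ha⟩ * rfmExt 1 ee ⟨a, by omega⟩ *
        (1 - rfmExt 1 ee ⟨a+1, by omega⟩) := fun a ha => rfl
  -- all flows equal r
  have hall : ∀ a, a ≤ N+1 → ∀ (ha : a < N+2), F ⟨a, ha⟩ = r := by
    refine down_induction ?_ ?_
    · intro ha
      rw [hF]
      rw [rfmExt_mid 1 ee N (by omega) (by omega), rfmExt_last 1 ee (by omega)]
      have hsc : scaledRates lamF v ⟨N+1, ha⟩ = lamF ⟨N+1, ha⟩ := by
        simp [scaledRates, Fin.ext_iff]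
      rw [hsc]
      have h2 : (⟨N+1, ha⟩ : Fin (N+2)) = Fin.last (N+1) := rfl
      have h3 : (⟨N, by omega⟩ : Fin (N+1)) = Fin.last N := rfl
      rw [h2, h3]; ring
    · intro k hk ih ha
      have hstep := hss ⟨k, by omega⟩
      have hca : (⟨k, by omega⟩ : Fin (N+1)).castSucc = (⟨k, ha⟩ : Fin (N+2)) := rfl
      have hsu : (⟨k, by omega⟩ : Fin (N+1)).succ = (⟨k+1, by omega⟩ : Fin (N+2)) := rfl
      rw [hca, hsu] at hstep
      exact hstep.trans (ih (by omega))
  have heepos : ∀ j, 0 < ee j := fun j => (hee j).1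
  have heelt : ∀ j, ee j < 1 := fun j => (hee j).2
  refine ⟨D, ⟨?_, ?_, ?_, ?_⟩, ?_⟩
  · simp [hDdef]
  · intro k hk
    by_cases h : k < N+1
    · simp only [hDdef, dif_pos h]
      linarith [heelt ⟨k, h⟩]
    · simp only [hDdef, dif_neg h]
      norm_num
  · exact mul_pos (hlamF _) (heepos _)
  · intro k hk
    have hfl := hall (k+1) (by omega) (by omega)
    rw [hF] at hfl
    have hsc : scaledRates lamF v ⟨k+1, by omega⟩ = lamF ⟨k+1, by omega⟩ := by
      simp [scaledRates, Fin.ext_iff]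
    rw [hsc, rfmExt_mid 1 ee k (by omega) (by omega)] at hfl
    have hlamN : (fun k => if h : k < N+2 then lamF ⟨k, h⟩ else 1) (k+1)
        = lamF ⟨k+1, by omega⟩ := by simp only [dif_pos (show k+1 < N+2 by omega)]
    have hDk : 1 - D k = ee ⟨k, by omega⟩ := by
      simp only [hDdef, dif_pos (show k < N+1 by omega)]; ring
    rw [hlamN, hDk]
    by_cases hkN : k < N
    · rw [rfmExt_mid 1 ee (k+1) (by omega) (by omega)] at hfl
      have hDk1 : D (k+1) = 1 - ee ⟨k+1, by omega⟩ := by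
        simp only [hDdef, dif_pos (show k+1 < N+1 by omega)]
      rw [hDk1]
      exact hfl
    · have hkN' : k = N := by omega
      subst hkN'
      rw [rfmExt_last 1 ee (by omega)] at hfl
      have hDk1 : D (k+1) = 1 := by
        simp only [hDdef]
        rw [dif_neg (by omega)]
      rw [hDk1]
      linarith [hfl]
  · have hfl := hall 0 (by omega) (by omega)
    rw [hF] at hfl
    have hsc : scaledRates lamF v ⟨0, by omega⟩ = v * lamF 0 := by
      simp [scaledRates, Fin.ext_iff]
    rw [hsc, rfmExt_zero 1 ee (by omega), rfmExt_mid 1 ee 0 (by omega) (by omega)] at hfl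
    have hD0 : D 0 = 1 - ee ⟨0, by omega⟩ := by
      simp only [hDdef, dif_pos (show 0 < N+1 by omega)]
    rw [hD0]
    linarith [hfl]

/-- For a single-layer network of `m` RFMs fed with constant inputs
`v_i > 0`, the steady-state network output `Y(v) = ∑ b_i λ^i_{n^i} e^i_{n^i}(v_i)`
(with fixed positive weights `b_i`) is strictly concave on `ℝ^m_{++}`. -/
theorem single_layer_network_output_strictly_concave
    (m : ℕ) (n : Fin m → ℕ)
    (lam : ∀ i : Fin m, Fin (n i + 2) → ℝ)
    (hlam : ∀ (i : Fin m) (j : Fin (n i + 2)), 0 < lam i j)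
    (b : Fin m → ℝ) (hb : ∀ i, 0 < b i)
    (v v' : Fin m → ℝ) (hv : ∀ i, 0 < v i) (hv' : ∀ i, 0 < v' i)
    (hne : v ≠ v')
    (t : ℝ) (ht : t ∈ Set.Ioo (0 : ℝ) 1)
    (e e' e'' : ∀ i : Fin m, Fin (n i + 1) → ℝ)
    (he : ∀ i j, e i j ∈ Set.Ioo (0 : ℝ) 1)
    (he' : ∀ i j, e' i j ∈ Set.Ioo (0 : ℝ) 1)
    (he'' : ∀ i j, e'' i j ∈ Set.Ioo (0 : ℝ) 1)
    (heq : ∀ i, rfmSS (scaledRates (lam i) (v i)) 1 (e i))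
    (heq' : ∀ i, rfmSS (scaledRates (lam i) (v' i)) 1 (e' i))
    (heq'' : ∀ i, rfmSS (scaledRates (lam i) (t * v i + (1 - t) * v' i)) 1 (e'' i)) :
    t * (∑ i : Fin m, b i * (lam i (Fin.last (n i + 1)) * e i (Fin.last (n i)))) +
      (1 - t) * (∑ i : Fin m, b i * (lam i (Fin.last (n i + 1)) * e' i (Fin.last (n i)))) <
      ∑ i : Fin m, b i * (lam i (Fin.last (n i + 1)) * e'' i (Fin.last (n i))) := by
  obtain ⟨ht0, ht1⟩ := ht
  have hkey : ∀ i : Fin m,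
      (t * (lam i (Fin.last (n i + 1)) * e i (Fin.last (n i))) +
        (1 - t) * (lam i (Fin.last (n i + 1)) * e' i (Fin.last (n i))) ≤
        lam i (Fin.last (n i + 1)) * e'' i (Fin.last (n i))) ∧
      (v i ≠ v' i →
        t * (lam i (Fin.last (n i + 1)) * e i (Fin.last (n i))) +
          (1 - t) * (lam i (Fin.last (n i + 1)) * e' i (Fin.last (n i))) <
          lam i (Fin.last (n i + 1)) * e'' i (Fin.last (n i))) := by
    intro i
    obtain ⟨D, hch, hveq⟩ := rfm_extract (lam i) (hlam i) (v i) (e i) (he i) (heq i)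
    obtain ⟨D', hch', hveq'⟩ := rfm_extract (lam i) (hlam i) (v' i) (e' i) (he' i) (heq' i)
    obtain ⟨D'', hch'', hveq''⟩ :=
      rfm_extract (lam i) (hlam i) (t * v i + (1 - t) * v' i) (e'' i) (he'' i) (heq'' i)
    have hlamN : ∀ k, k ≤ n i + 1 →
        0 < (fun k => if h : k < n i + 2 then lam i ⟨k, h⟩ else 1) k := by
      intro k hk
      have h2 : k < n i + 2 := by omega
      simp only [dif_pos h2]
      exact hlam i _
    exact rfm_key hlamN hch hch' hch'' (hlam i 0) (hv i) (hv' i) hveq hveq' hveq'' ht0 ht1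
  have hi0 : ∃ i, v i ≠ v' i := by
    by_contra hno
    push_neg at hno
    exact hne (funext hno)
  obtain ⟨i0, hi0⟩ := hi0
  rw [Finset.mul_sum, Finset.mul_sum, ← Finset.sum_add_distrib]
  refine Finset.sum_lt_sum (fun i _ => ?_) ⟨i0, Finset.mem_univ i0, ?_⟩
  · nlinarith [mul_nonneg (hb i).le (sub_nonneg.2 (hkey i).1)]
  · nlinarith [mul_pos (hb i0) (sub_pos.2 ((hkey i0).2 hi0))]
end

section
/- Consider a network of m RFMIOs with feedback inputs u^i = c^i_0 + Σ_{k=1}^m c^i_k y^k, where c^i_0 > 0 and c^i_k ≥ 0, and let F : ℝ^ℓ → ℝ^ℓ denote its vector field. Then F is a cooperative (Metzler-Jacobian) system on the cube: for every z ∈ [0,1]^ℓ and every pair of distinct indices p ≠ q, the partial derivative ∂F_p/∂z_q evaluated at z is nonnegative. -/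
open scoped BigOperators

/-- The input to RFMIO `i` in the network: `u^i = c^i_0 + ∑_k c^i_k y^k`,
where `y^k = λ^k_{n^k} x^k_{n^k}` is the output of RFMIO `k`. -/
noncomputable def netInput {m : ℕ} {n : Fin m → ℕ}
    (lam : ∀ i : Fin m, Fin (n i + 2) → ℝ)
    (c0 : Fin m → ℝ) (c : Fin m → Fin m → ℝ)
    (z : ∀ i : Fin m, Fin (n i + 1) → ℝ) (i : Fin m) : ℝ :=
  c0 i + ∑ k : Fin m, c i k * (lam k (Fin.last (n k + 1)) * z k (Fin.last (n k)))

/-- The vector field of the network of `m` RFMIOs with feedback connections. -/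
noncomputable def netVF {m : ℕ} {n : Fin m → ℕ}
    (lam : ∀ i : Fin m, Fin (n i + 2) → ℝ)
    (c0 : Fin m → ℝ) (c : Fin m → Fin m → ℝ)
    (z : ∀ i : Fin m, Fin (n i + 1) → ℝ) : ∀ i : Fin m, Fin (n i + 1) → ℝ :=
  fun i => rfmVF (lam i) (netInput lam c0 c z i) (z i)

/-- The network equilibrium equations. -/
def netSS {m : ℕ} {n : Fin m → ℕ}
    (lam : ∀ i : Fin m, Fin (n i + 2) → ℝ)
    (c0 : Fin m → ℝ) (c : Fin m → Fin m → ℝ)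
    (e : ∀ i : Fin m, Fin (n i + 1) → ℝ) : Prop :=
  ∀ i : Fin m, rfmSS (lam i) (netInput lam c0 c e i) (e i)

/-!
Moving one state coordinate `q` changes the component `p ≠ q` of the vector field only through
the two flows at site `p`. The inflow `λ e (1 - x_p)` has the entry `e` (a state coordinate or the
input `u`) as its only varying factor, and the outflow `λ x_p (1 - e')` has `1 - e'`. Since the
input is a nonnegative combination of outputs, every entry is nondecreasing in `q`, so the
inflow grows and the outflow shrinks.
-/

theorem hasDerivAt_ite_id_const (P : Prop) [Decidable P] (a s₀ : ℝ) :
    HasDerivAt (fun s : ℝ => if P then s else a) (if P then 1 else 0) s₀ := by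
  split_ifs
  · exact hasDerivAt_id s₀
  · exact hasDerivAt_const s₀ a

section RFM

variable {N : ℕ} {lam : Fin (N + 2) → ℝ} {u : ℝ → ℝ} {x : ℝ → Fin (N + 1) → ℝ}
  {du s₀ : ℝ} {dx : Fin (N + 1) → ℝ}

theorem rfmExt_nonneg {v : ℝ} {y : Fin (N + 1) → ℝ} (hv : 0 ≤ v) (hy : 0 ≤ y)
    (t : Fin (N + 3)) : 0 ≤ rfmExt v y t := by
  refine Fin.cases hv (fun t => ?_) t
  refine Fin.lastCases ?_ (fun l => ?_) t
  · simp [rfmExt]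
  · simpa [rfmExt] using hy l

theorem rfmExt_succ_castSucc (v : ℝ) (y : Fin (N + 1) → ℝ) (j : Fin (N + 1)) :
    rfmExt v y j.succ.castSucc = y j := by
  simp [rfmExt]

theorem hasDerivAt_rfmExt (hu : HasDerivAt u du s₀)
    (hx : ∀ l, HasDerivAt (fun s => x s l) (dx l) s₀) (t : Fin (N + 3)) :
    HasDerivAt (fun s => rfmExt (u s) (x s) t) (rfmExt du dx t) s₀ := by
  refine Fin.cases (by simpa [rfmExt] using hu) (fun t => ?_) t
  refine Fin.lastCases ?_ (fun l => ?_) t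
  · simpa [rfmExt] using hasDerivAt_const s₀ (0 : ℝ)
  · simpa [rfmExt] using hx l

theorem hasDerivAt_rfmFlow (hu : HasDerivAt u du s₀)
    (hx : ∀ l, HasDerivAt (fun s => x s l) (dx l) s₀) (j : Fin (N + 2)) :
    HasDerivAt (fun s => rfmFlow lam (u s) (x s) j)
      (lam j * rfmExt du dx j.castSucc * (1 - rfmExt (u s₀) (x s₀) j.succ)
        - lam j * rfmExt (u s₀) (x s₀) j.castSucc * rfmExt du dx j.succ) s₀ :=
  (((hasDerivAt_rfmExt hu hx j.castSucc).const_mul (lam j)).fun_mul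
    ((hasDerivAt_rfmExt hu hx j.succ).const_sub 1)).congr_deriv (by ring)

theorem deriv_rfmVF_nonneg (hlam : ∀ j, 0 ≤ lam j) (hu : HasDerivAt u du s₀)
    (hx : ∀ l, HasDerivAt (fun s => x s l) (dx l) s₀) (hdu : 0 ≤ du) (hdx : 0 ≤ dx)
    {j : Fin (N + 1)} (hdxj : dx j = 0) (hxj : x s₀ j ∈ Set.Icc 0 1) :
    0 ≤ deriv (fun s => rfmVF lam (u s) (x s) j) s₀ := by
  have hF : HasDerivAt (fun s => rfmVF lam (u s) (x s) j) _ s₀ :=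
    (hasDerivAt_rfmFlow hu hx j.castSucc).fun_sub (hasDerivAt_rfmFlow hu hx j.succ)
  rw [hF.deriv, Fin.succ_castSucc, rfmExt_succ_castSucc, rfmExt_succ_castSucc, hdxj]
  have hin : 0 ≤ lam j.castSucc * rfmExt du dx j.castSucc.castSucc * (1 - x s₀ j) :=
    mul_nonneg (mul_nonneg (hlam _) (rfmExt_nonneg hdu hdx _)) (sub_nonneg.2 hxj.2)
  have hout : 0 ≤ lam j.succ * x s₀ j * rfmExt du dx j.succ.succ :=
    mul_nonneg (mul_nonneg (hlam _) hxj.1) (rfmExt_nonneg hdu hdx _)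
  linarith

end RFM

theorem hasDerivAt_netInput {m : ℕ} {n : Fin m → ℕ} (lam : ∀ i : Fin m, Fin (n i + 2) → ℝ)
    (c0 : Fin m → ℝ) (c : Fin m → Fin m → ℝ) {z : ℝ → ∀ i : Fin m, Fin (n i + 1) → ℝ}
    {dz : ∀ i : Fin m, Fin (n i + 1) → ℝ} {s₀ : ℝ}
    (hz : ∀ k l, HasDerivAt (fun s => z s k l) (dz k l) s₀) (i : Fin m) :
    HasDerivAt (fun s => netInput lam c0 c (z s) i)
      (∑ k : Fin m, c i k * (lam k (Fin.last (n k + 1)) * dz k (Fin.last (n k)))) s₀ :=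
  (HasDerivAt.fun_sum fun k _ => ((hz k _).const_mul _).const_mul _).const_add _

theorem network_cooperative_general
    (m : ℕ) (n : Fin m → ℕ)
    (lam : ∀ i : Fin m, Fin (n i + 2) → ℝ)
    (hlam : ∀ (i : Fin m) (j : Fin (n i + 2)), 0 < lam i j)
    (c0 : Fin m → ℝ)
    (c : Fin m → Fin m → ℝ) (hc : ∀ i k, 0 ≤ c i k)
    (z : ∀ i : Fin m, Fin (n i + 1) → ℝ)
    (hz : ∀ i j, z i j ∈ Set.Icc (0 : ℝ) 1)
    (p q : Σ i : Fin m, Fin (n i + 1)) (hpq : p ≠ q) :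
    0 ≤ deriv (fun s : ℝ =>
        netVF lam c0 c
          (fun i j => if (⟨i, j⟩ : Σ i : Fin m, Fin (n i + 1)) = q then s else z i j)
          p.1 p.2)
      (z q.1 q.2) := by
  have hcurve : ∀ k l, HasDerivAt
      (fun s : ℝ => if (⟨k, l⟩ : Σ i : Fin m, Fin (n i + 1)) = q then s else z k l)
      (if (⟨k, l⟩ : Σ i : Fin m, Fin (n i + 1)) = q then 1 else 0) (z q.1 q.2) :=
    fun k l => hasDerivAt_ite_id_const _ _ _
  have hindicator : ∀ k l, 0 ≤ if (⟨k, l⟩ : Σ i : Fin m, Fin (n i + 1)) = q then (1 : ℝ) else 0 :=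
    fun k l => by split_ifs <;> norm_num
  refine deriv_rfmVF_nonneg (fun j => (hlam p.1 j).le) (hasDerivAt_netInput lam c0 c hcurve p.1)
    (hcurve p.1) ?_ (hindicator p.1) (if_neg hpq) ?_
  · exact Finset.sum_nonneg fun k _ => mul_nonneg (hc _ _) (mul_nonneg (hlam _ _).le (hindicator _ _))
  · simpa only [if_neg hpq] using hz p.1 p.2

/-- The network of `m` RFMIOs with feedback is a cooperative
(Metzler-Jacobian) system on the cube: at every state `z ∈ [0,1]^ℓ`, the partial
derivative of any component `p` of the vector field with respect to any other state
coordinate `q ≠ p` is nonnegative. -/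
theorem network_cooperative
    (m : ℕ) (n : Fin m → ℕ)
    (lam : ∀ i : Fin m, Fin (n i + 2) → ℝ)
    (hlam : ∀ (i : Fin m) (j : Fin (n i + 2)), 0 < lam i j)
    (c0 : Fin m → ℝ) (hc0 : ∀ i, 0 < c0 i)
    (c : Fin m → Fin m → ℝ) (hc : ∀ i k, 0 ≤ c i k)
    (z : ∀ i : Fin m, Fin (n i + 1) → ℝ)
    (hz : ∀ i j, z i j ∈ Set.Icc (0 : ℝ) 1)
    (p q : Σ i : Fin m, Fin (n i + 1)) (hpq : p ≠ q) :
    0 ≤ deriv (fun s : ℝ =>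
        netVF lam c0 c
          (fun i j => if (⟨i, j⟩ : Σ i : Fin m, Fin (n i + 1)) = q then s else z i j)
          p.1 p.2)
      (z q.1 q.2) :=
  network_cooperative_general m n lam hlam c0 c hc z hz p q hpq
end

section
/- Consider a network of m RFMIOs with feedback inputs u^i = c^i_0 + Σ_{k=1}^m c^i_k y^k, where c^i_0 > 0 and c^i_k ≥ 0, and let F : ℝ^ℓ → ℝ^ℓ denote its vector field. Then the closed cube [0,1]^ℓ is an invariant set, and solutions immediately enter the open cube: if z : [0,∞) → ℝ^ℓ is differentiable with ż(t) = F(z(t)) for all t ≥ 0 and z(0) ∈ [0,1]^ℓ, then z(t) ∈ [0,1]^ℓ for all t ≥ 0 and z(t) ∈ (0,1)^ℓ for all t > 0. -/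
open scoped BigOperators

/-
Let `Φ(t)` be the ℓ¹-distance from `z(t)` to `[0,1]^ℓ`. A term of the vector field can push a
coordinate further out of `[0,1]` only through a factor that measures how far a neighbouring
coordinate (or, through the outputs, the input) is itself outside. So on a compact time interval,
where `z` is bounded, the upper right Dini derivative of `Φ` is at most `K Φ`, and since
`Φ(0) = 0`, Gronwall's inequality gives `Φ ≡ 0`.

Inside the cube each site satisfies `ẋ ≥ α - β x` with `α > 0` as soon as its left neighbour stays
positive, which forces `x > 0`; the first site is fed by the input `u ≥ c₀ > 0`, so positivity
propagates along each chain from left to right. Symmetrically `1 - x` satisfies such an inequality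
as soon as the right neighbour stays below `1`, and the last site empties into the void, so
`x < 1` propagates from right to left.
-/

open Set Filter Topology

section Chain

variable {N : ℕ} (u : ℝ) (x : Fin (N + 1) → ℝ)

lemma rfmExt_castSucc_succ (j : Fin (N + 1)) : rfmExt u x j.castSucc.succ = x j := by
  rw [rfmExt, Fin.cons_succ, Fin.snoc_castSucc]

lemma rfmExt_last_succ : rfmExt u x (Fin.last (N + 1)).succ = 0 := by
  rw [rfmExt, Fin.cons_succ, Fin.snoc_last]

lemma rfmExt_succ_cases (k : Fin (N + 2)) :
    rfmExt u x k.succ = 0 ∨ ∃ j, rfmExt u x k.succ = x j := by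
  induction k using Fin.lastCases with
  | last => exact Or.inl (rfmExt_last_succ u x)
  | cast j => exact Or.inr ⟨j, rfmExt_castSucc_succ u x j⟩

lemma rfmExt_cases (k : Fin (N + 3)) :
    rfmExt u x k = u ∨ rfmExt u x k = 0 ∨ ∃ j, rfmExt u x k = x j := by
  induction k using Fin.cases with
  | zero => exact Or.inl rfl
  | succ k => exact Or.inr (rfmExt_succ_cases u x k)

lemma rfmExt_succ_castSucc_castSucc (j : Fin N) :
    rfmExt u x j.succ.castSucc.castSucc = x j.castSucc := by
  rw [← Fin.succ_castSucc, ← Fin.succ_castSucc, rfmExt_castSucc_succ]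

lemma rfmExt_castSucc_succ_succ (j : Fin N) : rfmExt u x j.castSucc.succ.succ = x j.succ := by
  rw [Fin.succ_castSucc, rfmExt_castSucc_succ]

lemma rfmExt_last_succ_succ : rfmExt u x (Fin.last N).succ.succ = 0 := by
  rw [Fin.succ_last, rfmExt_last_succ]

lemma rfmExt_succ_nonneg (hx : ∀ j, 0 ≤ x j) (k : Fin (N + 2)) : 0 ≤ rfmExt u x k.succ := by
  rcases rfmExt_succ_cases u x k with h | ⟨j, h⟩ <;> rw [h]
  exact hx j

lemma rfmExt_le_max_one (hx : ∀ j, x j ≤ 1) (k : Fin (N + 3)) : rfmExt u x k ≤ max u 1 := by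
  rcases rfmExt_cases u x k with h | h | ⟨j, h⟩ <;> rw [h]
  exacts [le_max_left u 1, zero_le_one.trans (le_max_right u 1),
    (hx j).trans (le_max_right u 1)]

/-- The left neighbour `rfmExt u x j.castSucc.castSucc` of site `j` is the input `u` for the first
site, and its right neighbour `rfmExt u x j.succ.succ` is an empty site after the last one. -/
lemma rfmVF_eq (lam : Fin (N + 2) → ℝ) (j : Fin (N + 1)) :
    rfmVF lam u x j = lam j.castSucc * rfmExt u x j.castSucc.castSucc * (1 - x j)
      - lam j.succ * x j * (1 - rfmExt u x j.succ.succ) := by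
  rw [rfmVF, rfmFlow, rfmFlow, rfmExt_castSucc_succ, ← Fin.succ_castSucc, rfmExt_castSucc_succ]

variable {u x} {lam : Fin (N + 2) → ℝ} {j : Fin (N + 1)}

lemma rfmVF_le_of_one_le (hlam : ∀ k, 0 ≤ lam k) {A M : ℝ} (hA : 0 ≤ A)
    (hL : -rfmExt u x j.castSucc.castSucc ≤ A) (hR : rfmExt u x j.succ.succ - 1 ≤ A)
    (hM : |x j| ≤ M) (hx : 1 ≤ x j) :
    rfmVF lam u x j ≤ (lam j.castSucc + lam j.succ) * A * (M + 1) := by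
  have hxM : x j ≤ M := (le_abs_self _).trans hM
  have hLx := mul_le_mul_of_nonneg_right hL (sub_nonneg.2 hx)
  have hRx := mul_le_mul_of_nonneg_left hR (zero_le_one.trans hx)
  rw [rfmVF_eq]
  nlinarith [mul_le_mul_of_nonneg_left hLx (hlam j.castSucc),
    mul_le_mul_of_nonneg_left hRx (hlam j.succ),
    mul_nonneg (hlam j.castSucc) hA, mul_nonneg (hlam j.succ) hA]

lemma neg_rfmVF_le_of_nonpos (hlam : ∀ k, 0 ≤ lam k) {A M : ℝ} (hA : 0 ≤ A)
    (hL : -rfmExt u x j.castSucc.castSucc ≤ A) (hR : rfmExt u x j.succ.succ - 1 ≤ A)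
    (hM : |x j| ≤ M) (hx : x j ≤ 0) :
    -rfmVF lam u x j ≤ (lam j.castSucc + lam j.succ) * A * (M + 1) := by
  have hxM : -x j ≤ M := (neg_le_abs _).trans hM
  have hLx := mul_le_mul_of_nonneg_right hL (by linarith : 0 ≤ 1 - x j)
  have hRx := mul_le_mul_of_nonneg_left hR (neg_nonneg.2 hx)
  rw [rfmVF_eq]
  nlinarith [mul_le_mul_of_nonneg_left hLx (hlam j.castSucc),
    mul_le_mul_of_nonneg_left hRx (hlam j.succ),
    mul_nonneg (hlam j.castSucc) hA, mul_nonneg (hlam j.succ) hA]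

lemma rfmVF_ge_of_le_left (hlam : ∀ k, 0 ≤ lam k) {b : ℝ} (hx : x j ∈ Icc (0 : ℝ) 1)
    (hR : 0 ≤ rfmExt u x j.succ.succ) (hL : b ≤ rfmExt u x j.castSucc.castSucc) :
    lam j.castSucc * b - (lam j.castSucc * b + lam j.succ) * x j ≤ rfmVF lam u x j := by
  rw [rfmVF_eq]
  nlinarith [mul_le_mul_of_nonneg_right hL (sub_nonneg.2 hx.2),
    mul_nonneg (hlam j.castSucc) (mul_nonneg (sub_nonneg.2 hL) (sub_nonneg.2 hx.2)),
    mul_nonneg (hlam j.succ) (mul_nonneg hx.1 hR)]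

lemma neg_rfmVF_ge_of_right_le (hlam : ∀ k, 0 ≤ lam k) {b B : ℝ} (hx : x j ∈ Icc (0 : ℝ) 1)
    (hL : rfmExt u x j.castSucc.castSucc ≤ B) (hR : b ≤ 1 - rfmExt u x j.succ.succ) :
    lam j.succ * b - (lam j.succ * b + lam j.castSucc * B) * (1 - x j) ≤ -rfmVF lam u x j := by
  rw [rfmVF_eq]
  nlinarith [mul_nonneg (hlam j.castSucc) (mul_nonneg (sub_nonneg.2 hL) (sub_nonneg.2 hx.2)),
    mul_nonneg (hlam j.succ) (mul_nonneg hx.1 (sub_nonneg.2 hR))]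

end Chain

section DistUnitCube

def distUnitInterval (w : ℝ) : ℝ := max (w - 1) 0 + max (-w) 0

lemma distUnitInterval_nonneg (w : ℝ) : 0 ≤ distUnitInterval w :=
  add_nonneg (le_max_right _ _) (le_max_right _ _)

lemma sub_one_le_distUnitInterval (w : ℝ) : w - 1 ≤ distUnitInterval w :=
  le_add_of_le_of_nonneg (le_max_left _ _) (le_max_right _ _)

lemma neg_le_distUnitInterval (w : ℝ) : -w ≤ distUnitInterval w :=
  le_add_of_nonneg_of_le (le_max_right _ _) (le_max_left _ _)

lemma distUnitInterval_eq_zero {w : ℝ} (hw : w ∈ Icc (0 : ℝ) 1) : distUnitInterval w = 0 := by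
  rw [distUnitInterval, max_eq_right (by linarith [hw.2]), max_eq_right (by linarith [hw.1]),
    add_zero]

variable {ι : Type*} [Fintype ι] {κ : ι → Type*} [∀ i, Fintype (κ i)]

def distUnitCube (v : ∀ i, κ i → ℝ) : ℝ := ∑ i, ∑ j, distUnitInterval (v i j)

lemma distUnitInterval_le_distUnitCube (v : ∀ i, κ i → ℝ) (i : ι) (j : κ i) :
    distUnitInterval (v i j) ≤ distUnitCube v :=
  (Finset.single_le_sum (fun j _ => distUnitInterval_nonneg (v i j)) (Finset.mem_univ j)).trans
    (Finset.single_le_sum (f := fun i => ∑ j, distUnitInterval (v i j))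
      (fun _ _ => Finset.sum_nonneg fun _ _ => distUnitInterval_nonneg _) (Finset.mem_univ i))

lemma distUnitCube_nonneg (v : ∀ i, κ i → ℝ) : 0 ≤ distUnitCube v :=
  Finset.sum_nonneg fun _ _ => Finset.sum_nonneg fun _ _ => distUnitInterval_nonneg _

lemma distUnitCube_eq_zero {v : ∀ i, κ i → ℝ} (hv : ∀ i j, v i j ∈ Icc (0 : ℝ) 1) :
    distUnitCube v = 0 :=
  Finset.sum_eq_zero fun i _ => Finset.sum_eq_zero fun j _ => distUnitInterval_eq_zero (hv i j)

lemma mem_Icc_of_distUnitCube_nonpos {v : ∀ i, κ i → ℝ} (hv : distUnitCube v ≤ 0) (i : ι)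
    (j : κ i) : v i j ∈ Icc (0 : ℝ) 1 := by
  have hd := (distUnitInterval_le_distUnitCube v i j).trans hv
  constructor
  · linarith [neg_le_distUnitInterval (v i j)]
  · linarith [sub_one_le_distUnitInterval (v i j)]

lemma continuous_distUnitCube : Continuous (distUnitCube : (∀ i, κ i → ℝ) → ℝ) := by
  unfold distUnitCube distUnitInterval
  fun_prop

end DistUnitCube

section Dini

def UpperRightDiniLE (f : ℝ → ℝ) (x D : ℝ) : Prop :=
  ∀ r, D < r → ∀ᶠ s in 𝓝[>] x, slope f x s < r

variable {f g : ℝ → ℝ} {x D E : ℝ}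

lemma HasDerivAt.upperRightDiniLE {f' : ℝ} (hf : HasDerivAt f f' x) : UpperRightDiniLE f x f' :=
  fun _ hr => (hf.tendsto_slope.mono_left (nhdsGT_le_nhdsNE x)).eventually_lt_const hr

lemma UpperRightDiniLE.mono (hf : UpperRightDiniLE f x D) (hDE : D ≤ E) :
    UpperRightDiniLE f x E :=
  fun r hr => hf r (hDE.trans_lt hr)

lemma UpperRightDiniLE.add (hf : UpperRightDiniLE f x D) (hg : UpperRightDiniLE g x E) :
    UpperRightDiniLE (fun s => f s + g s) x (D + E) := by
  intro r hr
  filter_upwards [hf (D + (r - D - E) / 2) (by linarith),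
    hg (E + (r - D - E) / 2) (by linarith)] with s hfs hgs
  have : slope (fun s => f s + g s) x s = slope f x s + slope g x s := by
    simp only [slope_def_field]; ring
  linarith

lemma upperRightDiniLE_sum {α : Type*} (s : Finset α) {F : α → ℝ → ℝ} {D : α → ℝ}
    (hF : ∀ a ∈ s, UpperRightDiniLE (F a) x (D a)) :
    UpperRightDiniLE (fun t => ∑ a ∈ s, F a t) x (∑ a ∈ s, D a) := by
  classical
  induction s using Finset.induction_on with
  | empty =>
    intro r hr
    simpa [slope_def_field] using Eventually.of_forall (f := 𝓝[>] x) fun _ => hr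
  | insert a s ha ih =>
    simp only [Finset.sum_insert ha]
    exact (hF a (Finset.mem_insert_self a s)).add
      (ih fun b hb => hF b (Finset.mem_insert_of_mem hb))

lemma HasDerivAt.upperRightDiniLE_max_zero {g' : ℝ} (hg : HasDerivAt g g' x) (hD : 0 ≤ D)
    (hg' : 0 ≤ g x → g' ≤ D) : UpperRightDiniLE (fun s => max (g s) 0) x D := by
  intro r hr
  rcases lt_or_ge (g x) 0 with hneg | hnonneg
  · filter_upwards [nhdsWithin_le_nhds (hg.continuousAt.eventually_lt continuousAt_const hneg)]
      with s hs
    simp only [slope_def_field, max_eq_right hs.le, max_eq_right hneg.le, sub_self, zero_div]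
    linarith
  · filter_upwards [hg.upperRightDiniLE r ((hg' hnonneg).trans_lt hr), self_mem_nhdsWithin]
      with s hs hxs
    have hsx : 0 < s - x := sub_pos.2 hxs
    rw [slope_def_field, div_lt_iff₀ hsx] at hs ⊢
    rw [max_eq_left hnonneg]
    have := mul_pos (hD.trans_lt hr) hsx
    rcases le_total (g s) 0 with h | h
    · rw [max_eq_right h]; linarith
    · rw [max_eq_left h]; exact hs

lemma HasDerivAt.upperRightDiniLE_distUnitCube {ι : Type*} [Fintype ι] {κ : ι → Type*}
    [∀ i, Fintype (κ i)] {y : ℝ → ∀ i, κ i → ℝ} {y' : ∀ i, κ i → ℝ} (hy : HasDerivAt y y' x)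
    {D : ∀ i, κ i → ℝ} (hD : ∀ i j, 0 ≤ D i j) (hup : ∀ i j, 1 ≤ y x i j → y' i j ≤ D i j)
    (hlow : ∀ i j, y x i j ≤ 0 → -y' i j ≤ D i j) :
    UpperRightDiniLE (fun t => distUnitCube (y t)) x (∑ i, ∑ j, 2 * D i j) := by
  refine upperRightDiniLE_sum _ fun i _ => upperRightDiniLE_sum _ fun j _ => ?_
  have hyij : HasDerivAt (fun t => y t i j) (y' i j) x := hasDerivAt_pi.1 (hasDerivAt_pi.1 hy i) j
  rw [two_mul]
  exact ((hyij.sub_const 1).upperRightDiniLE_max_zero (hD i j) fun h => hup i j (by linarith)).add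
    (hyij.neg.upperRightDiniLE_max_zero (hD i j) fun h => hlow i j (by simpa using h))

lemma nonpos_of_upperRightDiniLE_mul_self {a b K : ℝ} (hf : ContinuousOn f (Icc a b))
    (ha : f a ≤ 0) (hD : ∀ x ∈ Ico a b, UpperRightDiniLE f x (K * f x)) :
    ∀ x ∈ Icc a b, f x ≤ 0 := by
  intro x hx
  have := le_gronwallBound_of_liminf_deriv_right_le hf
    (fun x hx r hr => (hD x hx r hr).frequently) ha (fun x _ => (add_zero _).ge) x hx
  rwa [gronwallBound_ε0_δ0] at this

end Dini

lemma pos_of_hasDerivAt_ge_sub_mul {w w' : ℝ → ℝ} {t₀ t₁ α β : ℝ} (h01 : t₀ < t₁) (hα : 0 < α)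
    (hw : ∀ t ∈ Icc t₀ t₁, HasDerivAt w (w' t) t) (h0 : 0 ≤ w t₀)
    (hw' : ∀ t ∈ Icc t₀ t₁, α - β * w t ≤ w' t) : 0 < w t₁ := by
  set δ := α / (2 * (1 + |β| * (t₁ - t₀))) with hδ_def
  have hT : 0 < t₁ - t₀ := sub_pos.2 h01
  have hδ : 0 < δ := by positivity
  have hδα : δ * (1 + |β| * (t₁ - t₀)) = α / 2 := by
    rw [hδ_def]; field_simp
  -- the line `δ (t - t₀)` is a lower barrier: `w` can only touch it while moving faster than `δ`
  have hbarrier : ∀ t ∈ Icc t₀ t₁, δ * (t - t₀) ≤ w t := by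
    refine image_le_of_deriv_right_lt_deriv_boundary' (f' := fun _ => δ) (by fun_prop)
      (fun t _ => ?_) (by simpa using h0) (fun t ht => (hw t ht).continuousAt.continuousWithinAt)
      (fun t ht => (hw t (Ico_subset_Icc_self ht)).hasDerivWithinAt) fun t ht hwt => ?_
    · simpa using (((hasDerivAt_id t).sub_const t₀).const_mul δ).hasDerivWithinAt
    · have hwt' : w t ≤ δ * (t₁ - t₀) := by
        rw [← hwt]; exact mul_le_mul_of_nonneg_left (by linarith [ht.2]) hδ.le
      have hw0 : 0 ≤ w t := hwt ▸ mul_nonneg hδ.le (sub_nonneg.2 ht.1)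
      have hβw : β * w t ≤ |β| * (δ * (t₁ - t₀)) :=
        mul_le_mul (le_abs_self β) hwt' hw0 (abs_nonneg β)
      linarith [hw' t (Ico_subset_Icc_self ht)]
  nlinarith [hbarrier t₁ ⟨h01.le, le_rfl⟩]

section Network

variable {m : ℕ} {n : Fin m → ℕ} {lam : ∀ i : Fin m, Fin (n i + 2) → ℝ} {c0 : Fin m → ℝ}
  {c : Fin m → Fin m → ℝ}

def feedbackGain (lam : ∀ i : Fin m, Fin (n i + 2) → ℝ) (c : Fin m → Fin m → ℝ) (i : Fin m) : ℝ :=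
  ∑ k, c i k * lam k (Fin.last (n k + 1))

lemma feedbackGain_nonneg (hlam : ∀ i j, 0 ≤ lam i j) (hc : ∀ i k, 0 ≤ c i k) (i : Fin m) :
    0 ≤ feedbackGain lam c i :=
  Finset.sum_nonneg fun k _ => mul_nonneg (hc i k) (hlam k _)

lemma le_netInput (hlam : ∀ i j, 0 ≤ lam i j) (hc : ∀ i k, 0 ≤ c i k)
    {v : ∀ i : Fin m, Fin (n i + 1) → ℝ} (hv : ∀ i j, v i j ∈ Icc (0 : ℝ) 1) (i : Fin m) :
    c0 i ≤ netInput lam c0 c v i :=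
  le_add_of_nonneg_right <| Finset.sum_nonneg fun k _ =>
    mul_nonneg (hc i k) (mul_nonneg (hlam k _) (hv k _).1)

lemma netInput_le (hlam : ∀ i j, 0 ≤ lam i j) (hc : ∀ i k, 0 ≤ c i k)
    {v : ∀ i : Fin m, Fin (n i + 1) → ℝ} (hv : ∀ i j, v i j ∈ Icc (0 : ℝ) 1) (i : Fin m) :
    netInput lam c0 c v i ≤ c0 i + feedbackGain lam c i := by
  unfold netInput feedbackGain
  gcongr with k
  · exact hc i k
  · exact mul_le_of_le_one_right (hlam k _) (hv k _).2

lemma neg_netInput_le (hlam : ∀ i j, 0 ≤ lam i j) (hc0 : ∀ i, 0 ≤ c0 i) (hc : ∀ i k, 0 ≤ c i k)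
    (v : ∀ i : Fin m, Fin (n i + 1) → ℝ) (i : Fin m) :
    -netInput lam c0 c v i ≤ feedbackGain lam c i * distUnitCube v := by
  rw [netInput, feedbackGain, Finset.sum_mul, neg_add, ← Finset.sum_neg_distrib]
  refine add_le_of_nonpos_of_le (neg_nonpos.2 (hc0 i)) (Finset.sum_le_sum fun k _ => ?_)
  rw [← mul_neg, ← mul_neg, ← mul_assoc]
  exact mul_le_mul_of_nonneg_left ((neg_le_distUnitInterval _).trans
    (distUnitInterval_le_distUnitCube v k _)) (mul_nonneg (hc i k) (hlam k _))

lemma neg_rfmExt_netInput_le (hlam : ∀ i j, 0 ≤ lam i j) (hc0 : ∀ i, 0 ≤ c0 i)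
    (hc : ∀ i k, 0 ≤ c i k) (v : ∀ i : Fin m, Fin (n i + 1) → ℝ) (i : Fin m)
    (k : Fin (n i + 3)) :
    -rfmExt (netInput lam c0 c v i) (v i) k ≤ (feedbackGain lam c i + 1) * distUnitCube v := by
  have hU := feedbackGain_nonneg hlam hc i
  have hΦ := distUnitCube_nonneg v
  rcases rfmExt_cases (netInput lam c0 c v i) (v i) k with h | h | ⟨j, h⟩ <;> rw [h]
  · nlinarith [neg_netInput_le hlam hc0 hc v i]
  · rw [neg_zero]; positivity
  · nlinarith [neg_le_distUnitInterval (v i j), distUnitInterval_le_distUnitCube v i j]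

lemma rfmExt_succ_sub_one_le_distUnitCube (u : ℝ) (v : ∀ i : Fin m, Fin (n i + 1) → ℝ)
    (i : Fin m) (k : Fin (n i + 2)) : rfmExt u (v i) k.succ - 1 ≤ distUnitCube v := by
  rcases rfmExt_succ_cases u (v i) k with h | ⟨j, h⟩ <;> rw [h]
  · linarith [distUnitCube_nonneg v]
  · exact (sub_one_le_distUnitInterval _).trans (distUnitInterval_le_distUnitCube v i j)

lemma netVF_le_mul_distUnitCube (hlam : ∀ i j, 0 ≤ lam i j) (hc0 : ∀ i, 0 ≤ c0 i)
    (hc : ∀ i k, 0 ≤ c i k) {v : ∀ i : Fin m, Fin (n i + 1) → ℝ} {M : ℝ} {i : Fin m}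
    {j : Fin (n i + 1)} (hM : |v i j| ≤ M) :
    (1 ≤ v i j → netVF lam c0 c v i j ≤ (lam i j.castSucc + lam i j.succ) *
      (feedbackGain lam c i + 1) * (M + 1) * distUnitCube v) ∧
    (v i j ≤ 0 → -netVF lam c0 c v i j ≤ (lam i j.castSucc + lam i j.succ) *
      (feedbackGain lam c i + 1) * (M + 1) * distUnitCube v) := by
  have hU := feedbackGain_nonneg hlam hc i
  have hΦ := distUnitCube_nonneg v
  have hA : 0 ≤ (feedbackGain lam c i + 1) * distUnitCube v := by positivity
  have hL := neg_rfmExt_netInput_le hlam hc0 hc v i j.castSucc.castSucc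
  have hR := (rfmExt_succ_sub_one_le_distUnitCube (netInput lam c0 c v i) v i j.succ).trans
    (le_mul_of_one_le_left hΦ (le_add_of_nonneg_left hU))
  refine ⟨fun h => ?_, fun h => ?_⟩
  · exact (rfmVF_le_of_one_le (hlam i) hA hL hR hM h).trans_eq (by ring)
  · exact (neg_rfmVF_le_of_nonpos (hlam i) hA hL hR hM h).trans_eq (by ring)

end Network

section Trajectory

variable {m : ℕ} {n : Fin m → ℕ} {lam : ∀ i : Fin m, Fin (n i + 2) → ℝ} {c0 : Fin m → ℝ}
  {c : Fin m → Fin m → ℝ} {z : ℝ → ∀ i : Fin m, Fin (n i + 1) → ℝ}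

lemma hasDerivAt_netVF_trajectory_apply
    (hz : ∀ t : ℝ, 0 ≤ t → HasDerivAt z (netVF lam c0 c (z t)) t) {t : ℝ} (ht : 0 ≤ t)
    (i : Fin m) (j : Fin (n i + 1)) :
    HasDerivAt (fun t => z t i j) (netVF lam c0 c (z t) i j) t :=
  hasDerivAt_pi.1 (hasDerivAt_pi.1 (hz t ht) i) j

theorem netVF_trajectory_mem_Icc (hlam : ∀ i j, 0 ≤ lam i j) (hc0 : ∀ i, 0 ≤ c0 i)
    (hc : ∀ i k, 0 ≤ c i k) (hz : ∀ t : ℝ, 0 ≤ t → HasDerivAt z (netVF lam c0 c (z t)) t)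
    (hz0 : ∀ i j, z 0 i j ∈ Icc (0 : ℝ) 1) :
    ∀ t : ℝ, 0 ≤ t → ∀ i j, z t i j ∈ Icc (0 : ℝ) 1 := by
  intro b hb
  have hcont : ContinuousOn z (Icc 0 b) := fun t ht => (hz t ht.1).continuousAt.continuousWithinAt
  obtain ⟨M, hM⟩ := isCompact_Icc.exists_bound_of_continuousOn hcont
  have hzM : ∀ t ∈ Icc 0 b, ∀ i j, |z t i j| ≤ M := fun t ht i j =>
    (norm_le_pi_norm (z t i) j).trans ((norm_le_pi_norm (z t) i).trans (hM t ht))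
  set rate := fun i (j : Fin (n i + 1)) =>
    (lam i j.castSucc + lam i j.succ) * (feedbackGain lam c i + 1) * (M + 1)
  have hrate : ∀ i j, 0 ≤ rate i j := fun i j => by
    have := feedbackGain_nonneg hlam hc i
    have := hlam i j.castSucc
    have := hlam i j.succ
    have hM0 : 0 ≤ M := (abs_nonneg _).trans (hzM 0 ⟨le_rfl, hb⟩ i j)
    positivity
  have hdini : ∀ t ∈ Ico 0 b, UpperRightDiniLE (fun t => distUnitCube (z t)) t
      ((∑ i, ∑ j, 2 * rate i j) * distUnitCube (z t)) := by
    intro t ht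
    have hbound i j := netVF_le_mul_distUnitCube hlam hc0 hc (hzM t (Ico_subset_Icc_self ht) i j)
    refine ((hz t ht.1).upperRightDiniLE_distUnitCube
      (D := fun i j => rate i j * distUnitCube (z t)) (fun i j => ?_) (fun i j => (hbound i j).1)
      (fun i j => (hbound i j).2)).mono (by simp only [Finset.sum_mul, mul_assoc, le_refl])
    exact mul_nonneg (hrate i j) (distUnitCube_nonneg (z t))
  exact mem_Icc_of_distUnitCube_nonpos (nonpos_of_upperRightDiniLE_mul_self
    (continuous_distUnitCube.comp_continuousOn hcont) (distUnitCube_eq_zero hz0).le hdini b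
    ⟨hb, le_rfl⟩)

lemma netVF_trajectory_pos_of_left_ge (hlam : ∀ i j, 0 < lam i j)
    (hz : ∀ t : ℝ, 0 ≤ t → HasDerivAt z (netVF lam c0 c (z t)) t)
    (hcube : ∀ t : ℝ, 0 ≤ t → ∀ i j, z t i j ∈ Icc (0 : ℝ) 1) {i : Fin m} {s : Fin (n i + 1)}
    {t₀ t₁ b : ℝ} (ht₀ : 0 ≤ t₀) (h01 : t₀ < t₁) (hb : 0 < b)
    (hL : ∀ t ∈ Icc t₀ t₁, b ≤ rfmExt (netInput lam c0 c (z t) i) (z t i) s.castSucc.castSucc) :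
    0 < z t₁ i s :=
  pos_of_hasDerivAt_ge_sub_mul h01 (mul_pos (hlam i _) hb)
    (fun _ ht => hasDerivAt_netVF_trajectory_apply hz (ht₀.trans ht.1) i s)
    (hcube t₀ ht₀ i s).1 fun t ht =>
      rfmVF_ge_of_le_left (fun k => (hlam i k).le) (hcube t (ht₀.trans ht.1) i s)
        (rfmExt_succ_nonneg _ _ (fun j => (hcube t (ht₀.trans ht.1) i j).1) _) (hL t ht)

lemma netVF_trajectory_lt_one_of_right_le (hlam : ∀ i j, 0 < lam i j) (hc : ∀ i k, 0 ≤ c i k)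
    (hz : ∀ t : ℝ, 0 ≤ t → HasDerivAt z (netVF lam c0 c (z t)) t)
    (hcube : ∀ t : ℝ, 0 ≤ t → ∀ i j, z t i j ∈ Icc (0 : ℝ) 1) {i : Fin m} {s : Fin (n i + 1)}
    {t₀ t₁ b : ℝ} (ht₀ : 0 ≤ t₀) (h01 : t₀ < t₁) (hb : 0 < b)
    (hR : ∀ t ∈ Icc t₀ t₁, b ≤ 1 - rfmExt (netInput lam c0 c (z t) i) (z t i) s.succ.succ) :
    z t₁ i s < 1 := by
  have hlam' : ∀ i j, 0 ≤ lam i j := fun i j => (hlam i j).le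
  have hpos : 0 < 1 - z t₁ i s := pos_of_hasDerivAt_ge_sub_mul (w := fun t => 1 - z t i s) h01
    (mul_pos (hlam i _) hb)
    (fun _ ht => (hasDerivAt_netVF_trajectory_apply hz (ht₀.trans ht.1) i s).const_sub 1)
    (sub_nonneg.2 (hcube t₀ ht₀ i s).2) fun t ht =>
      neg_rfmVF_ge_of_right_le (hlam' i) (hcube t (ht₀.trans ht.1) i s)
        ((rfmExt_le_max_one _ _ (fun j => (hcube t (ht₀.trans ht.1) i j).2) _).trans
          (max_le_max_right 1 (netInput_le hlam' hc (hcube t (ht₀.trans ht.1)) i)))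
        (hR t ht)
  linarith

theorem netVF_trajectory_pos (hlam : ∀ i j, 0 < lam i j) (hc0 : ∀ i, 0 < c0 i)
    (hc : ∀ i k, 0 ≤ c i k) (hz : ∀ t : ℝ, 0 ≤ t → HasDerivAt z (netVF lam c0 c (z t)) t)
    (hcube : ∀ t : ℝ, 0 ≤ t → ∀ i j, z t i j ∈ Icc (0 : ℝ) 1) (i : Fin m) (j : Fin (n i + 1)) :
    ∀ t : ℝ, 0 < t → 0 < z t i j := by
  induction j using Fin.induction with
  | zero =>
    intro t ht
    exact netVF_trajectory_pos_of_left_ge hlam hz hcube le_rfl ht (hc0 i) fun τ hτ =>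
      le_netInput (fun i j => (hlam i j).le) hc (hcube τ hτ.1) i
  | succ j ih =>
    intro t ht
    obtain ⟨b, hb, hbz⟩ := isCompact_Icc.exists_forall_le'
      (fun τ hτ => (hasDerivAt_netVF_trajectory_apply hz (by linarith [hτ.1]) i
        j.castSucc).continuousAt.continuousWithinAt)
      (fun τ (hτ : τ ∈ Icc (t / 2) t) => ih τ (by linarith [hτ.1]))
    refine netVF_trajectory_pos_of_left_ge hlam hz hcube (t₀ := t / 2) (by positivity)
      (by linarith) hb fun τ hτ => ?_
    rw [rfmExt_succ_castSucc_castSucc]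
    exact hbz τ hτ

theorem netVF_trajectory_lt_one (hlam : ∀ i j, 0 < lam i j) (hc : ∀ i k, 0 ≤ c i k)
    (hz : ∀ t : ℝ, 0 ≤ t → HasDerivAt z (netVF lam c0 c (z t)) t)
    (hcube : ∀ t : ℝ, 0 ≤ t → ∀ i j, z t i j ∈ Icc (0 : ℝ) 1) (i : Fin m) (j : Fin (n i + 1)) :
    ∀ t : ℝ, 0 < t → z t i j < 1 := by
  induction j using Fin.reverseInduction with
  | last =>
    intro t ht
    refine netVF_trajectory_lt_one_of_right_le hlam hc hz hcube le_rfl ht one_pos fun τ _ => ?_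
    rw [rfmExt_last_succ_succ, sub_zero]
  | cast j ih =>
    intro t ht
    obtain ⟨b, hb, hbz⟩ := isCompact_Icc.exists_forall_le'
      (fun τ hτ => ((hasDerivAt_netVF_trajectory_apply hz (by linarith [hτ.1]) i
        j.succ).const_sub 1).continuousAt.continuousWithinAt)
      (fun τ (hτ : τ ∈ Icc (t / 2) t) => sub_pos.2 (ih τ (by linarith [hτ.1])))
    refine netVF_trajectory_lt_one_of_right_le hlam hc hz hcube (t₀ := t / 2) (by positivity)
      (by linarith) hb fun τ hτ => ?_
    rw [rfmExt_castSucc_succ_succ]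
    exact hbz τ hτ

end Trajectory

/-- For the network of `m` RFMIOs with feedback, the closed cube
`[0,1]^ℓ` is an invariant set of the dynamics, and solutions starting in the closed
cube immediately enter the open cube `(0,1)^ℓ`. -/
theorem network_cube_invariant
    (m : ℕ) (n : Fin m → ℕ)
    (lam : ∀ i : Fin m, Fin (n i + 2) → ℝ)
    (hlam : ∀ (i : Fin m) (j : Fin (n i + 2)), 0 < lam i j)
    (c0 : Fin m → ℝ) (hc0 : ∀ i, 0 < c0 i)
    (c : Fin m → Fin m → ℝ) (hc : ∀ i k, 0 ≤ c i k)
    (z : ℝ → ∀ i : Fin m, Fin (n i + 1) → ℝ)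
    (hz : ∀ t : ℝ, 0 ≤ t → HasDerivAt z (netVF lam c0 c (z t)) t)
    (hz0 : ∀ i j, z 0 i j ∈ Set.Icc (0 : ℝ) 1) :
    (∀ t : ℝ, 0 ≤ t → ∀ i j, z t i j ∈ Set.Icc (0 : ℝ) 1) ∧
    (∀ t : ℝ, 0 < t → ∀ i j, z t i j ∈ Set.Ioo (0 : ℝ) 1) := by
  have hcube := netVF_trajectory_mem_Icc (fun i j => (hlam i j).le) (fun i => (hc0 i).le) hc hz hz0
  exact ⟨hcube, fun t ht i j => ⟨netVF_trajectory_pos hlam hc0 hc hz hcube i j t ht,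
    netVF_trajectory_lt_one hlam hc hz hcube i j t ht⟩⟩
end

section
/- For v ∈ (0,1], define e(v) := (v − 1.1 + √((1.1 − v)² + 0.4v)) / (2v), and set e(0) := 1/11. Then: (i) for every v ∈ [0,1], 0 < e(v) < 1 and (0.1 + v·e(v))(1 − e(v)) = e(v), so e(v) is the unique equilibrium in (0,1) of the scalar feedback system ẋ = (0.1 + vx)(1 − x) − x; and (ii) e is strictly convex on (0,1) (its second derivative is positive there), so the steady-state output y_ss(v) = e(v) is not a concave function of the feedback weight v. -/
/-!
For `v > 0` the equilibrium equation `(0.1 + v x)(1 - x) = x` is the quadratic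
`v x² + (1.1 - v) x - 0.1 = 0`, whose constant term is negative, so it has exactly one positive
root, and `e(v)` is that root by the quadratic formula; at `v = 0` the equation is linear with
root `1/11`. A nonnegative equilibrium lies below `1`, since for `x ≥ 1` the left side is `≤ 0`.

Differentiating the equilibrium equation along `x = e(v)` gives `e' = e (1 - e) / D` with
`D = 2 v e + 1.1 - v > 0`, and differentiating once more and eliminating `v e²` with the
equation gives `e'' = 2 e (1 - e) (0.8 - v + 1.1 e) / D³`, which is positive for `v ∈ (0, 1)`.
A strictly convex function on an interval cannot be concave on a larger set.
-/

/-- The steady state of the scalar feedback system `ẋ = (0.1 + v x)(1 - x) - x`: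
`e(v) = (v - 1.1 + √((1.1 - v)² + 0.4 v)) / (2v)` for `v ≠ 0`, and `e(0) = 1/11`. -/
noncomputable def eFun : ℝ → ℝ := fun v =>
  if v = 0 then 1 / 11
  else (v - 1.1 + Real.sqrt ((1.1 - v) ^ 2 + 0.4 * v)) / (2 * v)

open Filter Topology Set

theorem StrictConvexOn.not_concaveOn {𝕜 E β : Type*} [Field 𝕜] [LinearOrder 𝕜]
    [IsStrictOrderedRing 𝕜] [AddCommMonoid E] [Module 𝕜 E] [AddCommMonoid β] [PartialOrder β]
    [SMul 𝕜 β] {s t : Set E} {f : E → β} (hf : StrictConvexOn 𝕜 s f) (hs : s.Nontrivial)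
    (hst : s ⊆ t) : ¬ ConcaveOn 𝕜 t f := by
  intro hg
  obtain ⟨x, hx, y, hy, hxy⟩ := hs
  have hhalf : (0 : 𝕜) < 1 / 2 := by norm_num
  exact (hf.2 hx hy hxy hhalf hhalf (add_halves 1)).not_ge
    (hg.2 (hst hx) (hst hy) hhalf.le hhalf.le (add_halves 1))

theorem sq_lt_discrim {a b c : ℝ} (ha : 0 < a) (hc : c < 0) : b ^ 2 < discrim a b c := by
  unfold discrim
  nlinarith

theorem quadratic_root_pos {a b c : ℝ} (ha : 0 < a) (hc : c < 0) :
    0 < (-b + √(discrim a b c)) / (2 * a) := by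
  have hb : b < √(discrim a b c) := Real.lt_sqrt_of_sq_lt (sq_lt_discrim ha hc)
  exact div_pos (by linarith) (by positivity)

theorem quadratic_eq_zero_iff_of_pos {a b c x : ℝ} (ha : 0 < a) (hc : c < 0) (hx : 0 < x) :
    a * (x * x) + b * x + c = 0 ↔ x = (-b + √(discrim a b c)) / (2 * a) := by
  have hd := sq_lt_discrim (b := b) ha hc
  have hb : -b < √(discrim a b c) := Real.lt_sqrt_of_sq_lt (by rwa [neg_sq])
  have hneg : (-b - √(discrim a b c)) / (2 * a) < 0 :=
    div_neg_of_neg_of_pos (by linarith) (by positivity)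
  rw [quadratic_eq_zero_iff ha.ne' (Real.mul_self_sqrt ((sq_nonneg b).trans hd.le)).symm]
  exact or_iff_left (by rintro rfl; linarith)

def IsEquilibrium (v x : ℝ) : Prop := (0.1 + v * x) * (1 - x) = x

theorem isEquilibrium_iff_quadratic (v x : ℝ) :
    IsEquilibrium v x ↔ v * (x * x) + (1.1 - v) * x + -0.1 = 0 := by
  unfold IsEquilibrium
  constructor <;> intro h <;> linear_combination -h

theorem IsEquilibrium.lt_one {v x : ℝ} (h : IsEquilibrium v x) (hv : 0 ≤ v) (hx : 0 ≤ x) :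
    x < 1 := by
  unfold IsEquilibrium at h
  nlinarith [mul_nonneg hv hx]

theorem IsEquilibrium.quadratic_deriv_pos {v x : ℝ} (h : IsEquilibrium v x) (hv : 0 ≤ v)
    (hx : 0 < x) : 0 < 2 * v * x + 1.1 - v := by
  unfold IsEquilibrium at h
  nlinarith [mul_nonneg hv (sq_nonneg x)]

theorem eFun_eq_quadratic_root {v : ℝ} (hv : v ≠ 0) :
    eFun v = (-(1.1 - v) + √(discrim v (1.1 - v) (-0.1))) / (2 * v) := by
  rw [eFun, if_neg hv, discrim]
  ring_nf

theorem isEquilibrium_iff_eq_eFun {v x : ℝ} (hv : 0 ≤ v) (hx : 0 < x) :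
    IsEquilibrium v x ↔ x = eFun v := by
  rcases hv.eq_or_lt with rfl | hv
  · simp only [IsEquilibrium, eFun, if_pos]
    constructor <;> intro h <;> linarith
  · rw [isEquilibrium_iff_quadratic, eFun_eq_quadratic_root hv.ne',
      quadratic_eq_zero_iff_of_pos hv (by norm_num) hx]

theorem eFun_pos {v : ℝ} (hv : 0 ≤ v) : 0 < eFun v := by
  rcases hv.eq_or_lt with rfl | hv
  · norm_num [eFun]
  · rw [eFun_eq_quadratic_root hv.ne']
    exact quadratic_root_pos hv (by norm_num)

theorem isEquilibrium_eFun {v : ℝ} (hv : 0 ≤ v) : IsEquilibrium v (eFun v) :=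
  (isEquilibrium_iff_eq_eFun hv (eFun_pos hv)).2 rfl

theorem differentiableAt_eFun {v : ℝ} (hv : 0 < v) : DifferentiableAt ℝ eFun v := by
  have hloc : eFun =ᶠ[𝓝 v] fun w => (w - 1.1 + √((1.1 - w) ^ 2 + 0.4 * w)) / (2 * w) :=
    eventuallyEq_of_mem (Ioi_mem_nhds hv) fun w hw => if_neg (ne_of_gt hw)
  refine DifferentiableAt.congr_of_eventuallyEq ?_ hloc
  fun_prop (disch := positivity)

theorem hasDerivAt_eFun {v : ℝ} (hv : 0 < v) :
    HasDerivAt eFun (eFun v * (1 - eFun v) / (2 * v * eFun v + 1.1 - v)) v := by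
  set e' := deriv eFun v
  have he : HasDerivAt eFun e' v := (differentiableAt_eFun hv).hasDerivAt
  have hquad : ∀ᶠ w in 𝓝 v, w * (eFun w * eFun w) + (1.1 - w) * eFun w + -0.1 = 0 :=
    eventually_of_mem (Ioi_mem_nhds hv) fun w hw =>
      (isEquilibrium_iff_quadratic w _).1 (isEquilibrium_eFun (le_of_lt hw))
  have hsum : HasDerivAt (fun w => w * (eFun w * eFun w) + (1.1 - w) * eFun w + -0.1)
      (1 * (eFun v * eFun v) + v * (e' * eFun v + eFun v * e') +
        ((0 - 1) * eFun v + (1.1 - v) * e')) v :=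
    (((hasDerivAt_id' v).mul (he.mul he)).add
      (((hasDerivAt_const v 1.1).sub (hasDerivAt_id' v)).mul he)).add_const (-0.1)
  have himplicit := hsum.unique ((hasDerivAt_const v 0).congr_of_eventuallyEq hquad)
  have hD := (isEquilibrium_eFun hv.le).quadratic_deriv_pos hv.le (eFun_pos hv.le)
  convert he using 1
  rw [div_eq_iff hD.ne']
  linear_combination -himplicit

theorem deriv_eFun_eventuallyEq {v : ℝ} (hv : 0 < v) :
    deriv eFun =ᶠ[𝓝 v] fun w => eFun w * (1 - eFun w) / (2 * w * eFun w + 1.1 - w) :=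
  eventually_of_mem (Ioi_mem_nhds hv) fun _ hw => (hasDerivAt_eFun hw).deriv

theorem deriv2_eFun {v : ℝ} (hv : 0 < v) :
    deriv (deriv eFun) v = 2 * eFun v * (1 - eFun v) * (0.8 - v + 1.1 * eFun v) /
      (2 * v * eFun v + 1.1 - v) ^ 3 := by
  set e := eFun v
  set D := 2 * v * e + 1.1 - v
  set e' := e * (1 - e) / D
  have he : HasDerivAt eFun e' v := hasDerivAt_eFun hv
  have hD : 0 < D := (isEquilibrium_eFun hv.le).quadratic_deriv_pos hv.le (eFun_pos hv.le)
  have hquad := (isEquilibrium_iff_quadratic v e).1 (isEquilibrium_eFun hv.le)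
  have hD' : HasDerivAt (fun w => 2 * w * eFun w + 1.1 - w) (2 * 1 * e + 2 * v * e' - 1) v :=
    ((((hasDerivAt_id' v).const_mul 2).mul he).add_const 1.1).sub (hasDerivAt_id' v)
  have h : HasDerivAt (fun w => eFun w * (1 - eFun w) / (2 * w * eFun w + 1.1 - w))
      (((e' * (1 - e) + e * -e') * D - e * (1 - e) * (2 * 1 * e + 2 * v * e' - 1)) / D ^ 2) v :=
    (he.mul (he.const_sub 1)).div hD' hD.ne'
  rw [(deriv_eFun_eventuallyEq hv).deriv_eq, h.deriv]
  have he'D : e' * D = e * (1 - e) := div_mul_cancel₀ _ hD.ne'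
  rw [div_eq_div_iff (by positivity) (by positivity)]
  linear_combination
    D ^ 2 * (((1 - 2 * e) * D - 2 * v * e * (1 - e)) * he'D - 6 * e * (1 - e) * hquad)

theorem deriv2_eFun_pos {v : ℝ} (hv : 0 < v) (hv1 : v < 1) : 0 < deriv (deriv eFun) v := by
  have heq := isEquilibrium_eFun hv.le
  have he0 := eFun_pos hv.le
  have hcompl : 0 < 1 - eFun v := sub_pos.2 (heq.lt_one hv.le he0.le)
  have hD := heq.quadratic_deriv_pos hv.le he0
  have hcurv : 0 < 0.8 - v + 1.1 * eFun v := by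
    unfold IsEquilibrium at heq
    nlinarith [mul_pos hv he0, mul_pos he0 hcompl]
  rw [deriv2_eFun hv]
  positivity

theorem strictConvexOn_eFun : StrictConvexOn ℝ (Ioo 0 1) eFun :=
  strictConvexOn_of_deriv2_pos' (convex_Ioo 0 1)
    (fun _ hv => (differentiableAt_eFun hv.1).continuousAt.continuousWithinAt)
    fun _ hv => deriv2_eFun_pos hv.1 hv.2

/-- (i) For every `v ∈ [0,1]`, `e(v) ∈ (0,1)`, it satisfies the
equilibrium equation `(0.1 + v e)(1 - e) = e`, and it is the unique equilibrium in
`(0,1)` of the scalar feedback system `ẋ = (0.1 + v x)(1 - x) - x`.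
(ii) `e` has positive second derivative on `(0,1)`, is strictly convex there, and
hence the steady-state output `y_ss(v) = e(v)` is not a concave function of the
feedback weight `v` on `[0,1]`. -/
theorem scalar_feedback_steady_state_not_concave :
    (∀ v ∈ Set.Icc (0 : ℝ) 1,
      eFun v ∈ Set.Ioo (0 : ℝ) 1 ∧
      (0.1 + v * eFun v) * (1 - eFun v) = eFun v ∧
      ∀ x ∈ Set.Ioo (0 : ℝ) 1, (0.1 + v * x) * (1 - x) = x → x = eFun v) ∧
    (∀ v ∈ Set.Ioo (0 : ℝ) 1, 0 < deriv (deriv eFun) v) ∧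
    StrictConvexOn ℝ (Set.Ioo (0 : ℝ) 1) eFun ∧
    ¬ ConcaveOn ℝ (Set.Icc (0 : ℝ) 1) eFun := by
  refine ⟨fun v ⟨hv, _⟩ => ?_, fun v hv => deriv2_eFun_pos hv.1 hv.2, strictConvexOn_eFun,
    strictConvexOn_eFun.not_concaveOn (Ioo_infinite zero_lt_one).nontrivial Ioo_subset_Icc_self⟩
  have heq := isEquilibrium_eFun hv
  exact ⟨⟨eFun_pos hv, heq.lt_one hv (eFun_pos hv).le⟩, heq,
    fun x hx => (isEquilibrium_iff_eq_eFun hv hx.1).1⟩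
end
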